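/- Let $a \in H^\infty(\mathbb{R}^d)$, $\sigma_a = (1+|\nabla_X a|^2)^{-1/4}$, and define the operator $\mathcal{P}_a = (\sigma_a \nabla_X \sigma_a^{-1} \cdot)^2 - \Big(\frac{\nabla_X a \cdot \nabla_X \sigma_a^{-1} \cdot}{(1+|\nabla_X a|^2)^{3/4}}\Big)^2$. Then there exist smooth functions $h_1$ and $h_2$ of the indicated arguments such that for all smooth $f$, $\mathcal{P}_a f = -\Lambda_a f + h_1(\nabla_X a, \nabla_X^2 a) \cdot \nabla_X f + h_2(\nabla_X a, \nabla_X^2 a, \nabla_X^3 a) f$, where $\Lambda_a = |D|^2 - \frac{\partial_i a \partial_j a}{1+|\nabla_X a|^2} D_i D_j$. In particular, $\mathcal{P}_a + \Lambda_a$ is a first-order differential operator. -/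

import Mathlib

open MeasureTheory Real
noncomputable section

abbrev Euc (d : ℕ) := EuclideanSpace ℝ (Fin d)

variable {d : ℕ}

/-- `i`-th partial derivative of a real-valued function on `ℝ^d`. -/
def pd (i : Fin d) (f : Euc d → ℝ) (x : Euc d) : ℝ :=
  fderiv ℝ f x (EuclideanSpace.single i 1)

/-- squared norm of the gradient -/
def gradSq (a : Euc d → ℝ) (x : Euc d) : ℝ := ∑ i, (pd i a x) ^ 2

/-- Fourier transform -/
def ft (f : Euc d → ℂ) (ξ : Euc d) : ℂ :=
  ∫ x : Euc d, Complex.exp (-(2 * π * (inner ℝ x ξ : ℝ)) * Complex.I) * f x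

/-- Sobolev `H^s` norm, defined through the Fourier transform. -/
def HsNorm (s : ℝ) (f : Euc d → ℂ) : ℝ :=
  (∫ ξ : Euc d, (1 + ‖ξ‖ ^ 2) ^ s * ‖ft f ξ‖ ^ 2) ^ (1/2 : ℝ)

def HsNormR (s : ℝ) (f : Euc d → ℝ) : ℝ := HsNorm s (fun x => (f x : ℂ))

/-- membership in the Sobolev space `H^s`. -/
def MemHs (s : ℝ) (f : Euc d → ℂ) : Prop :=
  Integrable (fun ξ : Euc d => (1 + ‖ξ‖ ^ 2) ^ s * ‖ft f ξ‖ ^ 2)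

def MemHsR (s : ℝ) (f : Euc d → ℝ) : Prop := MemHs s (fun x => (f x : ℂ))

/-- `a ∈ H^∞`. -/
def HInfty (a : Euc d → ℝ) : Prop := ContDiff ℝ (⊤ : ℕ∞) a ∧ ∀ s : ℝ, MemHsR s a

/-- `a ∈ C_b^∞`. -/
def CbSmooth (a : Euc d → ℝ) : Prop :=
  ContDiff ℝ (⊤ : ℕ∞) a ∧ ∀ k : ℕ, ∃ C, ∀ x, ‖iteratedFDeriv ℝ k a x‖ ≤ C

/-- the first integer strictly larger than `(d+1)/2`. -/
def m0 (d : ℕ) : ℕ := (d + 1) / 2 + 1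

/-- the coefficients `g_{ij}(∇a) = δ_{ij} - ∂_i a ∂_j a / (1+|∇a|²)` of `Λ_a`. -/
def gcoef (a : Euc d → ℝ) (i j : Fin d) (x : Euc d) : ℝ :=
  (if i = j then (1 : ℝ) else 0) - pd i a x * pd j a x / (1 + gradSq a x)

/-- the operator `Λ_a = |D|² - (∂_i a ∂_j a/(1+|∇a|²)) D_i D_j = -g_{ij}(∇a) ∂_i ∂_j`. -/
def LambdaOp (a : Euc d → ℝ) (f : Euc d → ℝ) : Euc d → ℝ :=
  fun x => -∑ i, ∑ j, gcoef a i j x * pd i (pd j f) x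

/-- `σ_a = (1+|∇a|²)^{-1/4}`. -/
def sigma_a (a : Euc d → ℝ) (x : Euc d) : ℝ := (1 + gradSq a x) ^ (-(1:ℝ)/4)

/-- the `i`-th component of the operator `g ↦ σ_a ∇_X (σ_a⁻¹ g)`. -/
def Aopi (a : Euc d → ℝ) (i : Fin d) (f : Euc d → ℝ) : Euc d → ℝ :=
  fun x => sigma_a a x * pd i (fun y => (sigma_a a y)⁻¹ * f y) x

/-- the operator `g ↦ (∇a · ∇(σ_a⁻¹ g)) / (1+|∇a|²)^{3/4}`. -/
def Bop (a : Euc d → ℝ) (f : Euc d → ℝ) : Euc d → ℝ :=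
  fun x => (∑ i, pd i a x * pd i (fun y => (sigma_a a y)⁻¹ * f y) x) /
    (1 + gradSq a x) ^ ((3:ℝ)/4)

/-- the operator `𝒫_a = (σ_a ∇ σ_a⁻¹ ·)² - ((∇a·∇ σ_a⁻¹ ·)/(1+|∇a|²)^{3/4})²`. -/
def Pop (a : Euc d → ℝ) (f : Euc d → ℝ) : Euc d → ℝ :=
  fun x => (∑ i, Aopi a i (Aopi a i f) x) - Bop a (Bop a f) x


-- ========== auxiliary development ==========

lemma contDiff_pd {f : Euc d → ℝ} (hf : ContDiff ℝ (⊤ : ℕ∞) f) (i : Fin d) :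
    ContDiff ℝ (⊤ : ℕ∞) (pd i f) := by
  have h1 : ContDiff ℝ (⊤ : ℕ∞) (fderiv ℝ f) := hf.fderiv_right (by simp)
  exact (ContinuousLinearMap.apply ℝ ℝ (EuclideanSpace.single i 1)).contDiff.comp h1

section basic
variable {f g : Euc d → ℝ} {x : Euc d}

lemma pd_add (hf : DifferentiableAt ℝ f x) (hg : DifferentiableAt ℝ g x) (i : Fin d) :
    pd i (fun y => f y + g y) x = pd i f x + pd i g x := by
  simp [pd, fderiv_fun_add hf hg]

lemma pd_mul (hf : DifferentiableAt ℝ f x) (hg : DifferentiableAt ℝ g x) (i : Fin d) :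
    pd i (fun y => f y * g y) x = pd i f x * g x + f x * pd i g x := by
  simp [pd, fderiv_fun_mul hf hg]; ring

lemma pd_sum {ι : Type*} {s : Finset ι} {F : ι → Euc d → ℝ}
    (h : ∀ j ∈ s, DifferentiableAt ℝ (F j) x) (i : Fin d) :
    pd i (fun y => ∑ j ∈ s, F j y) x = ∑ j ∈ s, pd i (F j) x := by
  simp [pd, fderiv_fun_sum h]

lemma pd_const (c : ℝ) (i : Fin d) : pd i (fun _ => c) x = 0 := by simp [pd]

lemma pd_const_add (hf : DifferentiableAt ℝ f x) (c : ℝ) (i : Fin d) :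
    pd i (fun y => c + f y) x = pd i f x := by
  simp [pd, fderiv_const_add]

lemma pd_const_mul (hf : DifferentiableAt ℝ f x) (c : ℝ) (i : Fin d) :
    pd i (fun y => c * f y) x = c * pd i f x := by
  simp [pd, fderiv_const_mul hf]

lemma pd_rpow (hf : DifferentiableAt ℝ f x) (hfx : f x ≠ 0) (r : ℝ) (i : Fin d) :
    pd i (fun y => f y ^ r) x = r * f x ^ (r - 1) * pd i f x := by
  have h := (Real.hasDerivAt_rpow_const (p := r) (Or.inl hfx)).comp_hasFDerivAt x
    hf.hasFDerivAt
  have h2 : fderiv ℝ (fun y => f y ^ r) x = (r * f x ^ (r - 1)) • fderiv ℝ f x := h.fderiv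
  simp [pd, h2]

lemma pd_inv (hf : DifferentiableAt ℝ f x) (hfx : f x ≠ 0) (i : Fin d) :
    pd i (fun y => (f y)⁻¹) x = -(pd i f x) / (f x) ^ 2 := by
  have h := (hasDerivAt_inv hfx).comp_hasFDerivAt x hf.hasFDerivAt
  have h2 : fderiv ℝ (fun y => (f y)⁻¹) x = -(f x ^ 2)⁻¹ • fderiv ℝ f x := h.fderiv
  simp [pd, h2]; ring

end basic

section grad
variable {a : Euc d → ℝ} (ha : ContDiff ℝ (⊤ : ℕ∞) a)
include ha

lemma contDiff_gradSq : ContDiff ℝ (⊤ : ℕ∞) (gradSq a) :=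
  ContDiff.sum fun i _ => (contDiff_pd ha i).pow 2

lemma gradSq_nonneg (x : Euc d) : 0 ≤ gradSq a x :=
  Finset.sum_nonneg fun i _ => sq_nonneg _

omit ha in
lemma s_pos (x : Euc d) : (0:ℝ) < 1 + gradSq a x := by
  have h : 0 ≤ gradSq a x := Finset.sum_nonneg fun i _ => sq_nonneg _
  linarith

lemma contDiff_s : ContDiff ℝ (⊤ : ℕ∞) (fun x : Euc d => 1 + gradSq a x) :=
  contDiff_const.add (contDiff_gradSq ha)

lemma contDiff_s_rpow (r : ℝ) : ContDiff ℝ (⊤ : ℕ∞) (fun x : Euc d => (1 + gradSq a x) ^ r) := by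
  rw [contDiff_iff_contDiffAt]
  intro x
  exact ((contDiff_s ha).contDiffAt).rpow_const_of_ne (ne_of_gt (s_pos x))

lemma pd_gradSq (i : Fin d) (x : Euc d) :
    pd i (gradSq a) x = 2 * ∑ j, pd j a x * pd i (pd j a) x := by
  have hd : ∀ j : Fin d, ∀ _ : j ∈ Finset.univ, DifferentiableAt ℝ (fun y => pd j a y ^ 2) x :=
    fun j _ => (((contDiff_pd ha j).pow 2).differentiable (by simp)).differentiableAt
  rw [show gradSq a = fun y => ∑ j, pd j a y ^ 2 from rfl, pd_sum hd i, Finset.mul_sum]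
  refine Finset.sum_congr rfl fun j _ => ?_
  have : (fun y => pd j a y ^ 2) = fun y => pd j a y * pd j a y := by
    funext y; ring
  rw [this, pd_mul (((contDiff_pd ha j).differentiable (by simp)).differentiableAt)
    (((contDiff_pd ha j).differentiable (by simp)).differentiableAt)]
  ring

lemma pd_pd_gradSq (i j : Fin d) (x : Euc d) :
    pd i (pd j (gradSq a)) x
      = 2 * ∑ k, (pd i (pd k a) x * pd j (pd k a) x + pd k a x * pd i (pd j (pd k a)) x) := by
  have h1 : pd j (gradSq a) = fun y => 2 * ∑ k, pd k a y * pd j (pd k a) y := by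
    funext y; exact pd_gradSq ha j y
  have hdk : ∀ k : Fin d, ∀ _ : k ∈ Finset.univ,
      DifferentiableAt ℝ (fun y => pd k a y * pd j (pd k a) y) x :=
    fun k _ => (((contDiff_pd ha k).mul (contDiff_pd (contDiff_pd ha k) j)).differentiable (by simp)).differentiableAt
  rw [h1, pd_const_mul ((ContDiff.sum (fun k _ => (contDiff_pd ha k).mul (contDiff_pd (contDiff_pd ha k) j))).differentiable
    (by simp)).differentiableAt 2 i, pd_sum hdk i]
  congr 1
  refine Finset.sum_congr rfl fun k _ => ?_
  rw [pd_mul (((contDiff_pd ha k).differentiable (by simp)).differentiableAt)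
    (((contDiff_pd (contDiff_pd ha k) j).differentiable (by simp)).differentiableAt)]
end grad

section values

def Sv (p : Fin d → ℝ) : ℝ := 1 + ∑ i, p i ^ 2

lemma Sv_pos (p : Fin d → ℝ) : 0 < Sv p := by
  have h : 0 ≤ ∑ i, p i ^ 2 := Finset.sum_nonneg fun i _ => sq_nonneg _
  unfold Sv; linarith

def Uv (p : Fin d → ℝ) : ℝ := Sv p ^ (-(1:ℝ)/2)
def D1v (p : Fin d → ℝ) (q : Fin d → Fin d → ℝ) (i : Fin d) : ℝ := 2 * ∑ j, p j * q i j
def D2v (p : Fin d → ℝ) (q : Fin d → Fin d → ℝ) (r : Fin d → Fin d → Fin d → ℝ)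
    (i j : Fin d) : ℝ := 2 * ∑ k, (q i k * q j k + p k * r i j k)
def Cv (p : Fin d → ℝ) (q : Fin d → Fin d → ℝ) (i : Fin d) : ℝ :=
  D1v p q i * 4⁻¹ * Uv p ^ 2
def dCv (p : Fin d → ℝ) (q : Fin d → Fin d → ℝ) (r : Fin d → Fin d → Fin d → ℝ)
    (j i : Fin d) : ℝ :=
  D2v p q r j i * 4⁻¹ * Uv p ^ 2 - D1v p q i * D1v p q j * 4⁻¹ * Uv p ^ 4
def Bv (p : Fin d → ℝ) (i : Fin d) : ℝ := p i * Uv p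
def dBv (p : Fin d → ℝ) (q : Fin d → Fin d → ℝ) (j i : Fin d) : ℝ :=
  q j i * Uv p - 2⁻¹ * p i * D1v p q j * Uv p ^ 3
def Wv (p : Fin d → ℝ) (q : Fin d → Fin d → ℝ) : ℝ := ∑ i, p i * D1v p q i
def Betav (p : Fin d → ℝ) (q : Fin d → Fin d → ℝ) : ℝ := Wv p q * 4⁻¹ * Uv p ^ 3
def dBetav (p : Fin d → ℝ) (q : Fin d → Fin d → ℝ) (r : Fin d → Fin d → Fin d → ℝ)
    (j : Fin d) : ℝ :=
  (∑ i, (q j i * D1v p q i + p i * D2v p q r j i)) * 4⁻¹ * Uv p ^ 3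
    - Wv p q * (3/2) * D1v p q j * 4⁻¹ * Uv p ^ 5

variable (d)

def H1 (z : (Fin d → ℝ) × (Fin d → Fin d → ℝ)) : Fin d → ℝ :=
  fun j => 2 * Cv z.1 z.2 j - (∑ i, Bv z.1 i * dBv z.1 z.2 i j)
    - 2 * Betav z.1 z.2 * Bv z.1 j

def H2 (z : (Fin d → ℝ) × (Fin d → Fin d → ℝ) × (Fin d → Fin d → Fin d → ℝ)) : ℝ :=
  (∑ i, (dCv z.1 z.2.1 z.2.2 i i + Cv z.1 z.2.1 i ^ 2))
    - (∑ i, Bv z.1 i * dBetav z.1 z.2.1 z.2.2 i) - Betav z.1 z.2.1 ^ 2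

variable {d}

lemma contDiff_Sv : ContDiff ℝ (⊤ : ℕ∞) (Sv (d := d)) := by
  unfold Sv
  exact contDiff_const.add (ContDiff.sum fun i _ =>
    ((ContinuousLinearMap.proj (R := ℝ) (φ := fun _ : Fin d => ℝ) i).contDiff).pow 2)

lemma contDiff_Uv : ContDiff ℝ (⊤ : ℕ∞) (Uv (d := d)) := by
  rw [contDiff_iff_contDiffAt]
  intro p
  exact contDiff_Sv.contDiffAt.rpow_const_of_ne (ne_of_gt (Sv_pos p))

@[fun_prop]
lemma ContDiff.sum'' {E : Type*} [NormedAddCommGroup E] [NormedSpace ℝ E]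
    {ι : Type*} (s : Finset ι) (f : ι → E → ℝ) (h : ∀ i, ContDiff ℝ (⊤ : ℕ∞) (f i)) :
    ContDiff ℝ (⊤ : ℕ∞) (fun x => ∑ i ∈ s, f i x) :=
  ContDiff.sum fun i _ => h i

@[fun_prop]
lemma contDiff_Uv' : ContDiff ℝ (⊤ : ℕ∞) (Uv (d := d)) := contDiff_Uv

lemma contDiff_H1 : ContDiff ℝ (⊤ : ℕ∞) (H1 d) := by
  apply contDiff_pi.mpr
  intro j
  unfold H1 Cv Bv dBv Betav Wv D1v
  fun_prop

lemma contDiff_H2 : ContDiff ℝ (⊤ : ℕ∞) (H2 d) := by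
  unfold H2 dCv Cv Bv dBetav Betav Wv D2v D1v
  fun_prop

-- rpow helpers
lemma upow {S : ℝ} (hS : 0 < S) (n : ℕ) : (S ^ (-(1:ℝ)/2)) ^ n = S ^ (-(n:ℝ)/2) := by
  rw [← Real.rpow_natCast (S ^ (-(1:ℝ)/2)) n, ← Real.rpow_mul hS.le]
  congr 1; ring

lemma u_sq {S : ℝ} (hS : 0 < S) : (S ^ (-(1:ℝ)/2)) ^ 2 = S⁻¹ := by
  rw [upow hS 2]
  rw [show (-((2:ℕ):ℝ)/2) = (-1 : ℝ) by norm_num, Real.rpow_neg_one]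

-- the concrete coefficient functions
def Cf (a : Euc d → ℝ) (i : Fin d) (x : Euc d) : ℝ :=
  pd i (gradSq a) x * (4 * (1 + gradSq a x))⁻¹
def Bf (a : Euc d → ℝ) (i : Fin d) (x : Euc d) : ℝ :=
  pd i a x * (1 + gradSq a x) ^ (-(1:ℝ)/2)
def Betaf (a : Euc d → ℝ) (x : Euc d) : ℝ :=
  (∑ i, pd i a x * pd i (gradSq a) x) * (1 + gradSq a x) ^ (-(3:ℝ)/2) * 4⁻¹

section ops
variable {a f g : Euc d → ℝ} (ha : ContDiff ℝ (⊤ : ℕ∞) a)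
include ha

lemma contDiff_Cf (i : Fin d) : ContDiff ℝ (⊤ : ℕ∞) (Cf a i) := by
  unfold Cf
  exact (contDiff_pd (contDiff_gradSq ha) i).mul
    (((contDiff_const.mul (contDiff_s ha)).inv) fun x => by
      have := s_pos (a := a) x; positivity)

lemma contDiff_Bf (i : Fin d) : ContDiff ℝ (⊤ : ℕ∞) (Bf a i) := by
  unfold Bf
  exact (contDiff_pd ha i).mul (contDiff_s_rpow ha _)

lemma contDiff_Betaf : ContDiff ℝ (⊤ : ℕ∞) (Betaf a) := by
  unfold Betaf
  exact ((ContDiff.sum fun i _ => (contDiff_pd ha i).mul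
    (contDiff_pd (contDiff_gradSq ha) i)).mul (contDiff_s_rpow ha _)).mul contDiff_const

lemma sigma_inv (y : Euc d) : (sigma_a a y)⁻¹ = (1 + gradSq a y) ^ ((1:ℝ)/4) := by
  unfold sigma_a
  rw [show (-(1:ℝ)/4) = -((1:ℝ)/4) by ring, Real.rpow_neg (s_pos (a := a) y).le, inv_inv]

lemma pd_taug (hg : ContDiff ℝ (⊤ : ℕ∞) g) (i : Fin d) (x : Euc d) :
    pd i (fun y => (sigma_a a y)⁻¹ * g y) x
      = ((1:ℝ)/4 * (1 + gradSq a x) ^ ((1:ℝ)/4 - 1) * pd i (gradSq a) x) * g x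
        + (1 + gradSq a x) ^ ((1:ℝ)/4) * pd i g x := by
  have h1 : (fun y => (sigma_a a y)⁻¹ * g y)
      = fun y => (1 + gradSq a y) ^ ((1:ℝ)/4) * g y := by
    funext y; rw [sigma_inv ha y]
  have hsd : DifferentiableAt ℝ (fun y : Euc d => 1 + gradSq a y) x :=
    ((contDiff_s ha).differentiable (by simp)).differentiableAt
  have hτd : DifferentiableAt ℝ (fun y : Euc d => (1 + gradSq a y) ^ ((1:ℝ)/4)) x :=
    ((contDiff_s_rpow ha _).differentiable (by simp)).differentiableAt
  have hgd : DifferentiableAt ℝ g x := (hg.differentiable (by simp)).differentiableAt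
  rw [h1, pd_mul hτd hgd i, pd_rpow hsd (ne_of_gt (s_pos x)) ((1:ℝ)/4) i,
    pd_const_add (((contDiff_gradSq ha).differentiable (by simp)).differentiableAt) 1 i]

lemma Aopi_apply (hg : ContDiff ℝ (⊤ : ℕ∞) g) (i : Fin d) (x : Euc d) :
    Aopi a i g x = pd i g x + Cf a i x * g x := by
  have hS := s_pos (a := a) x
  unfold Aopi Cf
  rw [pd_taug ha hg i x]
  set S := 1 + gradSq a x with hSdef
  rw [show sigma_a a x = S ^ (-(1:ℝ)/4) from rfl]
  have e1 : S ^ (-(1:ℝ)/4) * S ^ ((1:ℝ)/4) = 1 := by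
    rw [← Real.rpow_add hS]; norm_num
  have e2 : S ^ (-(1:ℝ)/4) * S ^ ((1:ℝ)/4 - 1) = S⁻¹ := by
    rw [← Real.rpow_add hS, show (-(1:ℝ)/4 + ((1:ℝ)/4 - 1)) = (-1:ℝ) by ring,
      Real.rpow_neg_one]
  have e3 : (4 * S)⁻¹ = 4⁻¹ * S⁻¹ := by rw [mul_inv]
  linear_combination (pd i (gradSq a) x * g x / 4) * e2 + pd i g x * e1
    - pd i (gradSq a) x * g x * e3

lemma Bop_apply (hg : ContDiff ℝ (⊤ : ℕ∞) g) (x : Euc d) :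
    Bop a g x = ∑ i, Bf a i x * pd i g x + Betaf a x * g x := by
  have hS := s_pos (a := a) x
  unfold Bop Bf Betaf
  set S := 1 + gradSq a x with hSdef
  rw [div_eq_mul_inv, show (S ^ ((3:ℝ)/4))⁻¹ = S ^ (-(3:ℝ)/4) by
    rw [show (-(3:ℝ)/4) = -((3:ℝ)/4) by ring, Real.rpow_neg hS.le]]
  have e4 : S ^ ((1:ℝ)/4) * S ^ (-(3:ℝ)/4) = S ^ (-(1:ℝ)/2) := by
    rw [← Real.rpow_add hS]; norm_num
  have e5 : S ^ ((1:ℝ)/4 - 1) * S ^ (-(3:ℝ)/4) = S ^ (-(3:ℝ)/2) := by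
    rw [← Real.rpow_add hS]; norm_num
  rw [Finset.sum_mul]
  have step : ∀ i : Fin d,
      pd i a x * pd i (fun y => (sigma_a a y)⁻¹ * g y) x * S ^ (-(3:ℝ)/4)
        = Bf a i x * pd i g x
          + pd i a x * pd i (gradSq a) x * S ^ (-(3:ℝ)/2) * 4⁻¹ * g x := by
    intro i
    rw [pd_taug ha hg i x]
    unfold Bf
    linear_combination (pd i a x * pd i g x) * e4
      + (pd i a x * pd i (gradSq a) x * g x / 4) * e5
  calc (∑ i, pd i a x * pd i (fun y => (sigma_a a y)⁻¹ * g y) x * S ^ (-(3:ℝ)/4))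
      = ∑ i, (Bf a i x * pd i g x
          + pd i a x * pd i (gradSq a) x * S ^ (-(3:ℝ)/2) * 4⁻¹ * g x) :=
        Finset.sum_congr rfl fun i _ => step i
    _ = ∑ i, Bf a i x * pd i g x
          + (∑ i, pd i a x * pd i (gradSq a) x) * S ^ (-(3:ℝ)/2) * 4⁻¹ * g x := by
        rw [Finset.sum_add_distrib]
        congr 1
        rw [Finset.sum_mul, Finset.sum_mul, Finset.sum_mul]

end ops

-- power conversion helpers
lemma u_pow3 {S : ℝ} (hS : 0 < S) :
    (S ^ (-(1:ℝ)/2)) ^ 3 = S⁻¹ * S ^ (-(1:ℝ)/2) := by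
  rw [pow_succ, u_sq hS]
lemma u_pow4 {S : ℝ} (hS : 0 < S) : (S ^ (-(1:ℝ)/2)) ^ 4 = S⁻¹ ^ 2 := by
  rw [show (4:ℕ) = 2*2 from rfl, pow_mul, u_sq hS]
lemma u_pow5 {S : ℝ} (hS : 0 < S) :
    (S ^ (-(1:ℝ)/2)) ^ 5 = S⁻¹ ^ 2 * S ^ (-(1:ℝ)/2) := by
  rw [pow_succ, u_pow4 hS]
lemma rpow_shift {S : ℝ} (hS : 0 < S) (r : ℝ) : S ^ (r - 1) = S⁻¹ * S ^ r := by
  rw [show r - 1 = (-1) + r by ring, Real.rpow_add hS, Real.rpow_neg_one]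
lemma rpow_32 {S : ℝ} (hS : 0 < S) : S ^ (-(3:ℝ)/2) = S⁻¹ * S ^ (-(1:ℝ)/2) := by
  rw [show (-(3:ℝ)/2) = (-(1:ℝ)/2 - 1) by norm_num, rpow_shift hS]

section vals
variable {a f g : Euc d → ℝ} (ha : ContDiff ℝ (⊤ : ℕ∞) a)
include ha

lemma pd_gradSq' (i : Fin d) (x : Euc d) :
    pd i (gradSq a) x
      = D1v (fun k => pd k a x) (fun k l => pd k (pd l a) x) i := by
  rw [pd_gradSq ha i x]; rfl

lemma pd_pd_gradSq' (i j : Fin d) (x : Euc d) :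
    pd i (pd j (gradSq a)) x
      = D2v (fun k => pd k a x) (fun k l => pd k (pd l a) x)
          (fun k l m => pd k (pd l (pd m a)) x) i j := by
  rw [pd_pd_gradSq ha i j x]; rfl

lemma val_Sv (x : Euc d) : Sv (fun k => pd k a x) = 1 + gradSq a x := rfl

lemma val_Cf (i : Fin d) (x : Euc d) :
    Cf a i x = Cv (fun k => pd k a x) (fun k l => pd k (pd l a) x) i := by
  have hS := s_pos (a := a) x
  unfold Cf Cv Uv
  rw [pd_gradSq' ha i x, val_Sv ha x, u_sq hS, mul_inv]
  ring

omit ha in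
lemma val_Bf (i : Fin d) (x : Euc d) :
    Bf a i x = Bv (fun k => pd k a x) i := rfl

lemma val_Betaf (x : Euc d) :
    Betaf a x = Betav (fun k => pd k a x) (fun k l => pd k (pd l a) x) := by
  have hS := s_pos (a := a) x
  unfold Betaf Betav Wv Uv
  rw [val_Sv ha x, u_pow3 hS, rpow_32 hS]
  rw [Finset.sum_congr rfl fun i _ => by rw [pd_gradSq' ha i x]]
  ring

lemma pd_Cf (j i : Fin d) (x : Euc d) :
    pd j (Cf a i) x
      = dCv (fun k => pd k a x) (fun k l => pd k (pd l a) x)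
          (fun k l m => pd k (pd l (pd m a)) x) j i := by
  have hS := s_pos (a := a) x
  have hGc : ContDiff ℝ (⊤ : ℕ∞) (gradSq a) := contDiff_gradSq ha
  have h1 : DifferentiableAt ℝ (pd i (gradSq a)) x :=
    ((contDiff_pd hGc i).differentiable (by simp)).differentiableAt
  have h4s : DifferentiableAt ℝ (fun y : Euc d => 4 * (1 + gradSq a y)) x :=
    ((contDiff_const.mul (contDiff_s ha)).differentiable (by simp)).differentiableAt
  have h4sne : (4 * (1 + gradSq a x)) ≠ 0 := by positivity
  have h2 : DifferentiableAt ℝ (fun y => (4 * (1 + gradSq a y))⁻¹) x :=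
    h4s.inv h4sne
  rw [show Cf a i = (fun y => pd i (gradSq a) y * (4 * (1 + gradSq a y))⁻¹) from rfl,
    pd_mul h1 h2 j, pd_inv h4s h4sne j,
    pd_const_mul (((contDiff_s ha).differentiable (by simp)).differentiableAt) 4 j,
    pd_const_add ((hGc.differentiable (by simp)).differentiableAt) 1 j,
    pd_pd_gradSq' ha j i x, pd_gradSq' ha j x, pd_gradSq' ha i x]
  unfold dCv Uv
  rw [val_Sv ha x, u_sq hS, u_pow4 hS]
  field_simp
  ring

lemma pd_Bf (j i : Fin d) (x : Euc d) :
    pd j (Bf a i) x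
      = dBv (fun k => pd k a x) (fun k l => pd k (pd l a) x) j i := by
  have hS := s_pos (a := a) x
  have hsd : DifferentiableAt ℝ (fun y : Euc d => 1 + gradSq a y) x :=
    ((contDiff_s ha).differentiable (by simp)).differentiableAt
  have h1 : DifferentiableAt ℝ (pd i a) x :=
    ((contDiff_pd ha i).differentiable (by simp)).differentiableAt
  have h2 : DifferentiableAt ℝ (fun y : Euc d => (1 + gradSq a y) ^ (-(1:ℝ)/2)) x :=
    ((contDiff_s_rpow ha _).differentiable (by simp)).differentiableAt
  rw [show Bf a i = (fun y => pd i a y * (1 + gradSq a y) ^ (-(1:ℝ)/2)) from rfl,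
    pd_mul h1 h2 j, pd_rpow hsd (ne_of_gt hS) _ j,
    pd_const_add (((contDiff_gradSq ha).differentiable (by simp)).differentiableAt) 1 j,
    pd_gradSq' ha j x]
  unfold dBv Uv
  rw [val_Sv ha x, u_pow3 hS, rpow_shift hS]
  ring

lemma pd_Betaf (j : Fin d) (x : Euc d) :
    pd j (Betaf a) x
      = dBetav (fun k => pd k a x) (fun k l => pd k (pd l a) x)
          (fun k l m => pd k (pd l (pd m a)) x) j := by
  have hS := s_pos (a := a) x
  have hGc : ContDiff ℝ (⊤ : ℕ∞) (gradSq a) := contDiff_gradSq ha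
  have hsd : DifferentiableAt ℝ (fun y : Euc d => 1 + gradSq a y) x :=
    ((contDiff_s ha).differentiable (by simp)).differentiableAt
  have hW : DifferentiableAt ℝ (fun y => ∑ i, pd i a y * pd i (gradSq a) y) x :=
    ((ContDiff.sum fun i _ => (contDiff_pd ha i).mul
      (contDiff_pd hGc i)).differentiable (by simp)).differentiableAt
  have h2 : DifferentiableAt ℝ (fun y : Euc d => (1 + gradSq a y) ^ (-(3:ℝ)/2)) x :=
    ((contDiff_s_rpow ha _).differentiable (by simp)).differentiableAt
  have hWterm : ∀ i : Fin d, ∀ _ : i ∈ Finset.univ,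
      DifferentiableAt ℝ (fun y => pd i a y * pd i (gradSq a) y) x :=
    fun i _ => (((contDiff_pd ha i).mul (contDiff_pd hGc i)).differentiable
      (by simp)).differentiableAt
  rw [show Betaf a = (fun y =>
      (∑ i, pd i a y * pd i (gradSq a) y) * (1 + gradSq a y) ^ (-(3:ℝ)/2) * 4⁻¹)
      from rfl]
  rw [show (fun y : Euc d =>
      (∑ i, pd i a y * pd i (gradSq a) y) * (1 + gradSq a y) ^ (-(3:ℝ)/2) * 4⁻¹)
    = (fun y : Euc d =>
      ((∑ i, pd i a y * pd i (gradSq a) y) * (1 + gradSq a y) ^ (-(3:ℝ)/2)) * 4⁻¹)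
    from rfl]
  rw [pd_mul (f := fun y => (∑ i, pd i a y * pd i (gradSq a) y) * (1 + gradSq a y) ^ (-(3:ℝ)/2))
      (hW.mul h2) (differentiableAt_const _) j, pd_const _ j,
    pd_mul hW h2 j, pd_sum hWterm j, pd_rpow hsd (ne_of_gt hS) _ j,
    pd_const_add ((hGc.differentiable (by simp)).differentiableAt) 1 j,
    pd_gradSq' ha j x]
  rw [Finset.sum_congr rfl fun i _ => by
    rw [pd_mul (((contDiff_pd ha i).differentiable (by simp)).differentiableAt)
        (((contDiff_pd hGc i).differentiable (by simp)).differentiableAt) j,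
      pd_pd_gradSq' ha j i x, pd_gradSq' ha i x,
      show pd j (pd i a) x = (fun k l => pd k (pd l a) x) j i from rfl]]
  simp only [pd_gradSq' ha]
  unfold dBetav Wv Uv
  rw [val_Sv ha x, rpow_shift hS, rpow_32 hS, u_pow3 hS, u_pow5 hS]
  rw [Finset.sum_add_distrib]
  ring
end vals

section assemble
variable {a f : Euc d → ℝ} (ha : ContDiff ℝ (⊤ : ℕ∞) a) (hf : ContDiff ℝ (⊤ : ℕ∞) f)
include ha hf

lemma Aopi_funext (i : Fin d) : Aopi a i f = fun y => pd i f y + Cf a i y * f y :=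
  funext fun y => Aopi_apply ha hf i y

lemma AA (i : Fin d) (x : Euc d) :
    Aopi a i (Aopi a i f) x
      = pd i (pd i f) x + pd i (Cf a i) x * f x + 2 * (Cf a i x * pd i f x)
        + Cf a i x ^ 2 * f x := by
  have h1 := Aopi_funext ha hf i
  have hA : ContDiff ℝ (⊤ : ℕ∞) (Aopi a i f) := by
    rw [h1]; exact (contDiff_pd hf i).add ((contDiff_Cf ha i).mul hf)
  rw [Aopi_apply ha hA i x, h1]
  rw [pd_add (((contDiff_pd hf i).differentiable (by simp)).differentiableAt)
      ((((contDiff_Cf ha i).mul hf).differentiable (by simp)).differentiableAt) i,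
    pd_mul (((contDiff_Cf ha i).differentiable (by simp)).differentiableAt)
      ((hf.differentiable (by simp)).differentiableAt) i]
  ring

lemma Bop_funext : Bop a f = fun y => ∑ j, Bf a j y * pd j f y + Betaf a y * f y :=
  funext fun y => Bop_apply ha hf y

lemma BB (x : Euc d) :
    Bop a (Bop a f) x
      = (∑ i, ∑ j, Bf a i x * Bf a j x * pd i (pd j f) x)
        + ((∑ j, (∑ i, Bf a i x * pd i (Bf a j) x) * pd j f x)
            + 2 * (Betaf a x * ∑ j, Bf a j x * pd j f x))
        + ((∑ i, Bf a i x * pd i (Betaf a) x) * f x + Betaf a x ^ 2 * f x) := by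
  have h1 := Bop_funext ha hf
  have hsum : ContDiff ℝ (⊤ : ℕ∞) (fun y => ∑ j, Bf a j y * pd j f y) :=
    ContDiff.sum fun j _ => (contDiff_Bf ha j).mul (contDiff_pd hf j)
  have hβf : ContDiff ℝ (⊤ : ℕ∞) (fun y => Betaf a y * f y) := (contDiff_Betaf ha).mul hf
  have hB : ContDiff ℝ (⊤ : ℕ∞) (Bop a f) := by rw [h1]; exact hsum.add hβf
  have hpdB : ∀ i : Fin d, pd i (Bop a f) x
      = (∑ j, (pd i (Bf a j) x * pd j f x + Bf a j x * pd i (pd j f) x))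
        + (pd i (Betaf a) x * f x + Betaf a x * pd i f x) := by
    intro i
    rw [h1, pd_add ((hsum.differentiable (by simp)).differentiableAt)
        ((hβf.differentiable (by simp)).differentiableAt) i,
      pd_sum (fun j _ => (((contDiff_Bf ha j).mul
        (contDiff_pd hf j)).differentiable (by simp)).differentiableAt) i,
      pd_mul (((contDiff_Betaf ha).differentiable (by simp)).differentiableAt)
        ((hf.differentiable (by simp)).differentiableAt) i,
      Finset.sum_congr rfl fun j _ => pd_mul
        (((contDiff_Bf ha j).differentiable (by simp)).differentiableAt)
        (((contDiff_pd hf j).differentiable (by simp)).differentiableAt) i]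
  rw [Bop_apply ha hB x, Bop_apply ha hf x,
    Finset.sum_congr rfl fun i _ => by rw [hpdB i]]
  -- now pure sum algebra
  have e1 : ∀ i : Fin d, Bf a i x * ((∑ j, (pd i (Bf a j) x * pd j f x
        + Bf a j x * pd i (pd j f) x)) + (pd i (Betaf a) x * f x + Betaf a x * pd i f x))
      = (∑ j, Bf a i x * (pd i (Bf a j) x * pd j f x))
        + (∑ j, Bf a i x * Bf a j x * pd i (pd j f) x)
        + (Bf a i x * pd i (Betaf a) x * f x + Betaf a x * (Bf a i x * pd i f x)) := by
    intro i
    rw [mul_add, Finset.mul_sum]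
    have h4 : ∀ j : Fin d, Bf a i x * (pd i (Bf a j) x * pd j f x
          + Bf a j x * pd i (pd j f) x)
        = Bf a i x * (pd i (Bf a j) x * pd j f x)
          + Bf a i x * Bf a j x * pd i (pd j f) x := fun j => by ring
    rw [Finset.sum_congr rfl fun j (_ : j ∈ Finset.univ) => h4 j,
      Finset.sum_add_distrib]
    ring
  rw [Finset.sum_congr rfl fun i _ => e1 i]
  simp only [Finset.sum_add_distrib]
  rw [← Finset.sum_mul (f := fun i => Bf a i x * pd i (Betaf a) x),
    ← Finset.mul_sum Finset.univ (fun i => Bf a i x * pd i f x) (Betaf a x),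
    Finset.sum_comm (f := fun i j => Bf a i x * (pd i (Bf a j) x * pd j f x))]
  have e2 : ∀ j : Fin d, (∑ i, Bf a i x * (pd i (Bf a j) x * pd j f x))
      = (∑ i, Bf a i x * pd i (Bf a j) x) * pd j f x := by
    intro j; rw [Finset.sum_mul]; exact Finset.sum_congr rfl fun i _ => by ring
  rw [Finset.sum_congr rfl fun j _ => e2 j]
  ring

lemma neg_Lambda (x : Euc d) :
    -(LambdaOp a f x)
      = (∑ i, pd i (pd i f) x) - ∑ i, ∑ j, Bf a i x * Bf a j x * pd i (pd j f) x := by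
  have hS := s_pos (a := a) x
  unfold LambdaOp gcoef
  rw [neg_neg]
  have e1 : ∀ i j : Fin d, Bf a i x * Bf a j x * pd i (pd j f) x
      = pd i a x * pd j a x / (1 + gradSq a x) * pd i (pd j f) x := by
    intro i j
    unfold Bf
    rw [div_eq_mul_inv (pd i a x * pd j a x) (1 + gradSq a x), ← u_sq hS]
    ring
  rw [Finset.sum_congr rfl fun i (_ : i ∈ Finset.univ) =>
    Finset.sum_congr rfl fun j (_ : j ∈ Finset.univ) => e1 i j]
  rw [← Finset.sum_sub_distrib]
  refine Finset.sum_congr rfl fun i _ => ?_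
  have : ∀ j : Fin d, ((if i = j then (1:ℝ) else 0)
        - pd i a x * pd j a x / (1 + gradSq a x)) * pd i (pd j f) x
      = (if i = j then (1:ℝ) else 0) * pd i (pd j f) x
        - pd i a x * pd j a x / (1 + gradSq a x) * pd i (pd j f) x := by
    intro j; ring
  rw [Finset.sum_congr rfl fun j (_ : j ∈ Finset.univ) => this j]
  rw [Finset.sum_sub_distrib]
  congr 1
  simp [ite_mul]

end assemble

section finalsec
variable {a f : Euc d → ℝ} (ha : ContDiff ℝ (⊤ : ℕ∞) a)
include ha

lemma val_H1 (j : Fin d) (x : Euc d) :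
    H1 d (fun k => pd k a x, fun k l => pd k (pd l a) x) j
      = 2 * Cf a j x - (∑ i, Bf a i x * pd i (Bf a j) x)
        - 2 * (Betaf a x * Bf a j x) := by
  unfold H1
  dsimp only
  simp only [val_Cf ha, val_Betaf ha, pd_Bf ha, val_Bf]
  ring

lemma val_H2 (x : Euc d) :
    H2 d (fun k => pd k a x, fun k l => pd k (pd l a) x,
        fun k l m => pd k (pd l (pd m a)) x)
      = (∑ i, (pd i (Cf a i) x + Cf a i x ^ 2))
        - (∑ i, Bf a i x * pd i (Betaf a) x) - Betaf a x ^ 2 := by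
  unfold H2
  dsimp only
  simp only [val_Cf ha, pd_Cf ha, val_Betaf ha, pd_Betaf ha, val_Bf]

lemma main_identity (hf : ContDiff ℝ (⊤ : ℕ∞) f) (x : Euc d) :
    Pop a f x = -(LambdaOp a f x)
      + (∑ i, H1 d (fun i' => pd i' a x, fun i' j' => pd i' (pd j' a) x) i * pd i f x)
      + H2 d (fun i' => pd i' a x, fun i' j' => pd i' (pd j' a) x,
            fun i' j' l' => pd i' (pd j' (pd l' a)) x) * f x := by
  unfold Pop
  have hAA : ∑ i, Aopi a i (Aopi a i f) x
      = ∑ i, (pd i (pd i f) x + pd i (Cf a i) x * f x + 2 * (Cf a i x * pd i f x)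
          + Cf a i x ^ 2 * f x) :=
    Finset.sum_congr rfl fun i _ => AA ha hf i x
  have hH1 : ∑ i, H1 d (fun i' => pd i' a x, fun i' j' => pd i' (pd j' a) x) i * pd i f x
      = ∑ i, (2 * Cf a i x - (∑ k, Bf a k x * pd k (Bf a i) x)
          - 2 * (Betaf a x * Bf a i x)) * pd i f x :=
    Finset.sum_congr rfl fun i _ => by rw [val_H1 ha i x]
  rw [hAA, BB ha hf x, neg_Lambda ha hf x, val_H2 ha x, hH1]
  -- split the sums
  simp only [Finset.sum_add_distrib, Finset.sum_sub_distrib, sub_mul, add_mul]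
  rw [← Finset.sum_mul (f := fun i => pd i (Cf a i) x),
    ← Finset.sum_mul (f := fun i => Cf a i x ^ 2),
    ← Finset.mul_sum Finset.univ (fun i => Cf a i x * pd i f x) (2:ℝ)]
  have h5 : ∑ j, 2 * Cf a j x * pd j f x = 2 * ∑ j, Cf a j x * pd j f x := by
    rw [Finset.mul_sum]
    exact Finset.sum_congr rfl fun j _ => by ring
  have h6 : ∑ j, 2 * (Betaf a x * Bf a j x) * pd j f x
      = 2 * (Betaf a x * ∑ j, Bf a j x * pd j f x) := by
    rw [Finset.mul_sum, Finset.mul_sum]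
    exact Finset.sum_congr rfl fun j _ => by ring
  rw [h5, h6]
  ring
end finalsec

/-- `𝒫_a f = -Λ_a f + h₁(∇a,∇²a)·∇f + h₂(∇a,∇²a,∇³a) f` for smooth
functions `h₁, h₂` of the indicated arguments; in particular `𝒫_a + Λ_a` has order one. -/
theorem Pop_eq_neg_LambdaOp_add_lower_order (d : ℕ) :
    ∃ (h₁ : ((Fin d → ℝ) × (Fin d → Fin d → ℝ)) → (Fin d → ℝ))
      (h₂ : ((Fin d → ℝ) × (Fin d → Fin d → ℝ) × (Fin d → Fin d → Fin d → ℝ)) → ℝ),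
      ContDiff ℝ (⊤ : ℕ∞) h₁ ∧ ContDiff ℝ (⊤ : ℕ∞) h₂ ∧
      ∀ a : Euc d → ℝ, HInfty a →
      ∀ f : Euc d → ℝ, ContDiff ℝ (⊤ : ℕ∞) f →
      ∀ x : Euc d,
        Pop a f x = -(LambdaOp a f x)
          + (∑ i, h₁ (fun i' => pd i' a x, fun i' j' => pd i' (pd j' a) x) i * pd i f x)
          + h₂ (fun i' => pd i' a x, fun i' j' => pd i' (pd j' a) x,
                fun i' j' l' => pd i' (pd j' (pd l' a)) x) * f x := by
  refine ⟨H1 d, H2 d, contDiff_H1, contDiff_H2, ?_⟩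
  intro a hA f hf x
  exact main_identity hA.1 hf x
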